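/- arXiv:2011.06710 — 6 statements merged into one kernel-verified Lean document; each statement's English description precedes it below -/
import Mathlib

section
/- Let g : ℝ → ℝ be continuous, nonnegative, increasing with g(0) ≤ 1. Let σ₁ ≥ σ₂ > 0 and τ > 0 with τ < σ₁. Let t₁ be the unique solution of g(σ₁ - t) = t/τ and t₂ the unique solution of g(σ₁ + σ₂ - 2t) = t/τ. If t₁ < σ₂, then t₁ < t₂ and t₂ < σ₂. -/
theorem stmt_1 (g : ℝ → ℝ) (hgc : Continuous g) (hgm : StrictMono g)
    (hgnn : ∀ x, 0 ≤ g x) (hg0 : g 0 ≤ 1)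
    (σ₁ σ₂ τ t₁ t₂ : ℝ) (hσ : σ₂ ≤ σ₁) (hσ₂ : 0 < σ₂)
    (hτ : 0 < τ) (hτσ : τ < σ₁)
    (ht₁ : g (σ₁ - t₁) = t₁ / τ)
    (ht₂ : g (σ₁ + σ₂ - 2 * t₂) = t₂ / τ)
    (h : t₁ < σ₂) :
    t₁ < t₂ ∧ t₂ < σ₂ := by
  constructor
  · by_contra hc
    push_neg at hc
    have h1 : σ₁ - t₁ < σ₁ + σ₂ - 2 * t₂ := by nlinarith
    have h2 := hgm h1
    rw [ht₁, ht₂] at h2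
    have := (div_lt_div_iff_of_pos_right hτ).mp h2
    linarith
  · by_contra hc
    push_neg at hc
    have h1 : σ₁ + σ₂ - 2 * t₂ < σ₁ - t₁ := by nlinarith
    have h2 := hgm h1
    rw [ht₁, ht₂] at h2
    have := (div_lt_div_iff_of_pos_right hτ).mp h2
    linarith
end

section
/- Let g : ℝ → ℝ be continuous, nonnegative, increasing with g(0) ≤ 1, and let σ₁ ≥ σ₂ ≥ … ≥ σ_r > 0 and 0 < τ < σ₁. For each j with 1 ≤ j ≤ r let t_j be the unique solution of g(∑_{i=1}^j σ_i − j t) = t/τ. For any j < r, if t_j < σ_{j+1} and t_j < σ_j, then t_j < t_{j+1} and t_{j+1} < σ_{j+1}. -/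
theorem stmt_2 (g : ℝ → ℝ) (hgc : Continuous g) (hgm : StrictMono g)
    (hgnn : ∀ x, 0 ≤ g x) (hg0 : g 0 ≤ 1)
    (r : ℕ) (σ t : ℕ → ℝ) (τ : ℝ)
    (hσpos : ∀ i, 1 ≤ i → i ≤ r → 0 < σ i)
    (hσmono : ∀ i, 1 ≤ i → i < r → σ (i + 1) ≤ σ i)
    (hτ : 0 < τ) (hτσ : τ < σ 1)
    (ht : ∀ j, 1 ≤ j → j ≤ r → g ((∑ i ∈ Finset.Icc 1 j, σ i) - (j : ℝ) * t j) = t j / τ) :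
    ∀ j, 1 ≤ j → j < r → t j < σ (j + 1) → t j < σ j →
      t j < t (j + 1) ∧ t (j + 1) < σ (j + 1) := by
  intro j hj hjr h1 h2
  have hA := ht j hj (le_of_lt hjr)
  have hB := ht (j + 1) (by omega) hjr
  have hsum : ∑ i ∈ Finset.Icc 1 (j + 1), σ i
      = (∑ i ∈ Finset.Icc 1 j, σ i) + σ (j + 1) := by
    rw [Finset.sum_Icc_succ_top (by omega : 1 ≤ j + 1)]
  set S := ∑ i ∈ Finset.Icc 1 j, σ i with hS
  rw [hsum] at hB
  have htj : τ * g (S - (j : ℝ) * t j) = t j := by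
    rw [hA]; field_simp
  have htj1 : τ * g (S + σ (j + 1) - ((j : ℝ) + 1) * t (j + 1)) = t (j + 1) := by
    rw [show ((j : ℝ) + 1) = ((j + 1 : ℕ) : ℝ) by push_cast; ring, hB]; field_simp
  have hjpos : (1 : ℝ) ≤ (j : ℝ) := by exact_mod_cast hj
  constructor
  · by_contra h
    push_neg at h
    have hlt : S - (j : ℝ) * t j < S + σ (j + 1) - ((j : ℝ) + 1) * t (j + 1) := by
      nlinarith
    have := hgm hlt
    nlinarith
  · by_contra h
    push_neg at h
    have hlt : S + σ (j + 1) - ((j : ℝ) + 1) * t (j + 1) < S - (j : ℝ) * t j := by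
      nlinarith
    have := hgm hlt
    nlinarith
end

section
/- Let g : ℝ → ℝ be continuous, nonnegative, increasing with g(0) ≤ 1, let σ₁ ≥ … ≥ σ_r > 0, 0 < τ < σ₁, and for each 1 ≤ j ≤ r let t_j be the unique solution of g(∑_{i=1}^j σ_i − j t_j) = t_j/τ. Extend with σ_{r+1} = −∞. Then there exists a unique j with 1 ≤ j ≤ r such that σ_{j+1} ≤ t_j < σ_j. -/
theorem stmt_3 (g : ℝ → ℝ) (hgc : Continuous g) (hgm : StrictMono g)
    (hgnn : ∀ x, 0 ≤ g x) (hg0 : g 0 ≤ 1)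
    (r : ℕ) (hr : 1 ≤ r) (σ t : ℕ → ℝ) (τ : ℝ)
    (hσpos : ∀ i, 1 ≤ i → i ≤ r → 0 < σ i)
    (hσmono : ∀ i, 1 ≤ i → i < r → σ (i + 1) ≤ σ i)
    (hτ : 0 < τ) (hτσ : τ < σ 1)
    (ht : ∀ j, 1 ≤ j → j ≤ r → g ((∑ i ∈ Finset.Icc 1 j, σ i) - (j : ℝ) * t j) = t j / τ) :
    ∃! j, 1 ≤ j ∧ j ≤ r ∧ t j < σ j ∧ (j < r → σ (j + 1) ≤ t j) := by
  -- key sign lemma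
  have key : ∀ j, 1 ≤ j → j ≤ r → ∀ x : ℝ,
      (t j < x ↔ g ((∑ i ∈ Finset.Icc 1 j, σ i) - (j : ℝ) * x) < x / τ) := by
    intro j hj1 hjr x
    set S := ∑ i ∈ Finset.Icc 1 j, σ i with hS
    have hjpos : (0:ℝ) < j := by exact_mod_cast hj1
    have hanti : StrictAnti (fun y : ℝ => g (S - (j:ℝ) * y) - y / τ) := by
      intro a b hab
      have h1 : S - (j:ℝ) * b < S - (j:ℝ) * a := by nlinarith
      have h2 := hgm h1
      have h3 : a / τ < b / τ := div_lt_div_of_pos_right hab hτ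
      dsimp only
      linarith
    have hzero : g (S - (j:ℝ) * t j) - t j / τ = 0 := by rw [ht j hj1 hjr]; ring
    constructor
    · intro h
      have := hanti h
      dsimp only at this
      rw [hzero] at this
      linarith
    · intro h
      by_contra hc
      push_neg at hc
      rcases eq_or_lt_of_le hc with he | hlt
      · subst he; linarith
      · have := hanti hlt
        dsimp only at this
        rw [hzero] at this
        linarith
  -- transfer lemma
  have key2 : ∀ j, 1 ≤ j → j + 1 ≤ r → (t j < σ (j+1) ↔ t (j+1) < σ (j+1)) := by
    intro j hj1 hjr
    rw [key j hj1 (by omega) (σ (j+1)), key (j+1) (by omega) hjr (σ (j+1))]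
    have hsum : (∑ i ∈ Finset.Icc 1 (j+1), σ i) = (∑ i ∈ Finset.Icc 1 j, σ i) + σ (j+1) :=
      Finset.sum_Icc_succ_top (by omega) σ
    rw [hsum]
    have harg : (∑ i ∈ Finset.Icc 1 j, σ i) + σ (j+1) - ((j:ℝ)+1) * σ (j+1)
        = (∑ i ∈ Finset.Icc 1 j, σ i) - (j:ℝ) * σ (j+1) := by ring
    push_cast
    rw [harg]
  -- base case
  have hbase : t 1 < σ 1 := by
    rw [key 1 le_rfl hr (σ 1)]
    have : (∑ i ∈ Finset.Icc 1 1, σ i) = σ 1 := by simp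
    rw [this]
    have h1 : (1:ℝ) < σ 1 / τ := (one_lt_div hτ).mpr hτσ
    have h2 : σ 1 - ((1:ℕ):ℝ) * σ 1 = 0 := by push_cast; ring
    rw [h2]
    linarith
  -- existence by descending induction
  have exist : ∀ n j, 1 ≤ j → j ≤ r → r - j ≤ n → t j < σ j →
      ∃ k, 1 ≤ k ∧ k ≤ r ∧ t k < σ k ∧ (k < r → σ (k + 1) ≤ t k) := by
    intro n
    induction n with
    | zero =>
      intro j hj1 hjr hn htj
      have : j = r := by omega
      exact ⟨j, hj1, hjr, htj, fun h => absurd h (by omega)⟩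
    | succ n ih =>
      intro j hj1 hjr hn htj
      by_cases hjeq : j = r
      · exact ⟨j, hj1, hjr, htj, fun h => absurd h (by omega)⟩
      · have hjr' : j + 1 ≤ r := by omega
        by_cases hcase : σ (j+1) ≤ t j
        · exact ⟨j, hj1, hjr, htj, fun _ => hcase⟩
        · push_neg at hcase
          have : t (j+1) < σ (j+1) := (key2 j hj1 hjr').mp hcase
          exact ih (j+1) (by omega) hjr' (by omega) this
  obtain ⟨j0, hj01, hj0r, hj0t, hj0c⟩ := exist (r - 1) 1 le_rfl hr (by omega) hbase
  -- chain lemma for uniqueness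
  have chain : ∀ j, 1 ≤ j → j < r → σ (j+1) ≤ t j →
      ∀ m, j + 1 ≤ m → m ≤ r → σ m ≤ t m := by
    intro j hj1 hjr hjt m hm1
    induction m, hm1 using Nat.le_induction with
    | base =>
      intro hmr
      have := (key2 j hj1 (by omega)).not.mp (not_lt.mpr hjt)
      exact not_lt.mp this
    | succ m hm ihm =>
      intro hmr
      have hmr' : m ≤ r := by omega
      have h1 : σ m ≤ t m := ihm hmr'
      have h2 : σ (m+1) ≤ σ m := hσmono m (by omega) (by omega)
      have h3 : ¬ t m < σ (m+1) := not_lt.mpr (le_trans h2 h1)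
      have := (key2 m (by omega) (by omega)).not.mp h3
      exact not_lt.mp this
  refine ⟨j0, ⟨hj01, hj0r, hj0t, hj0c⟩, ?_⟩
  rintro y ⟨hy1, hyr, hyt, hyc⟩
  by_contra hne
  rcases lt_or_gt_of_ne hne with hlt | hgt
  · -- y < j0
    have hylt : y < r := by omega
    have := chain y hy1 hylt (hyc hylt) j0 (by omega) hj0r
    exact absurd hj0t (not_lt.mpr this)
  · -- j0 < y
    have hjlt : j0 < r := by omega
    have := chain j0 hj01 hjlt (hj0c hjlt) y (by omega) hyr
    exact absurd hyt (not_lt.mpr this)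
end

section
/- Let g : ℝ → ℝ be continuous, nonnegative, increasing with g(0) ≤ 1, let σ₁ ≥ … ≥ σ_r > 0 and 0 < τ < σ₁, and let t_j be the unique solution of g(∑_{i=1}^j σ_i − j t_j) = t_j/τ for each j. If j* is an index with σ_{j*+1} ≤ t_{j*} < σ_{j*} (with σ_{r+1} := −∞), then for every k with 1 ≤ k ≤ r − j*, it holds that t_{j*+k} ≥ σ_{j*+k}; in particular no index larger than j* satisfies the bracketing condition. -/
theorem stmt_4 (g : ℝ → ℝ) (hgc : Continuous g) (hgm : StrictMono g)
    (hgnn : ∀ x, 0 ≤ g x) (hg0 : g 0 ≤ 1)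
    (r : ℕ) (σ t : ℕ → ℝ) (τ : ℝ)
    (hσpos : ∀ i, 1 ≤ i → i ≤ r → 0 < σ i)
    (hσmono : ∀ i, 1 ≤ i → i < r → σ (i + 1) ≤ σ i)
    (hτ : 0 < τ) (hτσ : τ < σ 1)
    (ht : ∀ j, 1 ≤ j → j ≤ r → g ((∑ i ∈ Finset.Icc 1 j, σ i) - (j : ℝ) * t j) = t j / τ)
    (jstar : ℕ) (hj1 : 1 ≤ jstar) (hjr : jstar ≤ r)
    (hbr : t jstar < σ jstar) (hbl : jstar < r → σ (jstar + 1) ≤ t jstar) :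
    ∀ k, 1 ≤ k → jstar + k ≤ r → σ (jstar + k) ≤ t (jstar + k) := by
  have key : ∀ j, 1 ≤ j → j + 1 ≤ r → σ (j + 1) ≤ t j → σ (j + 1) ≤ t (j + 1) := by
    intro j hj hjr' hle
    by_contra h
    push_neg at h
    have h1 := ht j hj (by omega)
    have h2 := ht (j + 1) (by omega) hjr'
    have hsum : (∑ i ∈ Finset.Icc 1 (j + 1), σ i) = (∑ i ∈ Finset.Icc 1 j, σ i) + σ (j + 1) :=
      Finset.sum_Icc_succ_top (by omega) σ
    have hjnn : (0 : ℝ) ≤ (j : ℝ) := by positivity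
    have harg : (∑ i ∈ Finset.Icc 1 j, σ i) - (j : ℝ) * t j <
        (∑ i ∈ Finset.Icc 1 (j + 1), σ i) - ((j + 1 : ℕ) : ℝ) * t (j + 1) := by
      rw [hsum]
      push_cast
      nlinarith [mul_le_mul_of_nonneg_left hle hjnn,
        mul_lt_mul_of_pos_left h (by positivity : (0:ℝ) < (j:ℝ) + 1)]
    have hg := hgm harg
    rw [h1, h2] at hg
    have : t j < t (j + 1) := by
      rwa [div_lt_div_iff_of_pos_right hτ] at hg
    linarith
  intro k hk hkr
  induction k with
  | zero => omega
  | succ m ih =>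
    rcases Nat.eq_zero_or_pos m with hm | hm
    · subst hm
      exact key jstar hj1 (by omega) (hbl (by omega))
    · have hprev : σ (jstar + m + 1) ≤ t (jstar + m) := by
        have h1 := ih hm (by omega)
        have h2 := hσmono (jstar + m) (by omega) (by omega)
        linarith
      have := key (jstar + m) (by omega) (by omega) hprev
      simpa [Nat.add_assoc] using this
end

section
/- Let g : ℝ → ℝ be nondecreasing and let τ > 0, and suppose for indices j < j' (with corresponding nonincreasing positive σ's) that t_j and t_{j'} satisfy τ·g(∑_{i=1}^{j} σ_i − j t_j) = t_j and τ·g(∑_{i=1}^{j'} σ_i − j' t_{j'}) = t_{j'}, with σ_{j+1} ≤ t_j and t_{j'} < σ_{j'}. Then these hypotheses are contradictory, since they yield both t_{j'} > t_j and t_{j'} < t_j; hence no j' > j can satisfy σ_{j'+1} ≤ t_{j'} < σ_{j'} when j already satisfies σ_{j+1} ≤ t_j < σ_j. -/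
theorem stmt_14 (g : ℝ → ℝ) (hgm : Monotone g) (τ : ℝ) (hτ : 0 < τ)
    (r : ℕ) (σ t : ℕ → ℝ)
    (hσpos : ∀ i, 1 ≤ i → i ≤ r → 0 < σ i)
    (hσmono : ∀ i, 1 ≤ i → i < r → σ (i + 1) ≤ σ i)
    (ht : ∀ k, 1 ≤ k → k ≤ r →
      τ * g ((∑ i ∈ Finset.Icc 1 k, σ i) - (k : ℝ) * t k) = t k)
    (j j' : ℕ) (hj1 : 1 ≤ j) (hjj' : j < j') (hj'r : j' ≤ r)
    (hj : σ (j + 1) ≤ t j) (hj' : t j' < σ j') :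
    False := by
  -- antitonicity of σ on [1, r]
  have hanti : ∀ a b : ℕ, 1 ≤ a → a ≤ b → b ≤ r → σ b ≤ σ a := by
    intro a b ha hab hbr
    induction b with
    | zero => omega
    | succ n ih =>
      rcases Nat.lt_or_ge a (n+1) with h | h
      · have h1 : σ (n+1) ≤ σ n := hσmono n (by omega) (by omega)
        exact h1.trans (ih (by omega) (by omega))
      · have : a = n + 1 := by omega
        simp [this]
  have hjr : j ≤ r := le_of_lt (lt_of_lt_of_le hjj' hj'r)
  have hj'1 : 1 ≤ j' := le_trans hj1 (le_of_lt hjj')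
  -- t j' < t j
  have hlt : t j' < t j := by
    have h1 : σ j' ≤ σ (j+1) := hanti (j+1) j' (by omega) (by omega) hj'r
    linarith
  -- split the sum
  have hsum : ∑ i ∈ Finset.Icc 1 j', σ i
      = (∑ i ∈ Finset.Icc 1 j, σ i) + ∑ i ∈ Finset.Ico (j+1) (j'+1), σ i := by
    rw [← Finset.Ico_add_one_right_eq_Icc 1 j', ← Finset.Ico_add_one_right_eq_Icc 1 j]
    exact (Finset.sum_Ico_consecutive _ (by omega) (by omega)).symm
  -- lower bound for the middle sum
  have hmid : (j' - j : ℝ) * σ j' ≤ ∑ i ∈ Finset.Ico (j+1) (j'+1), σ i := by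
    have h1 : ∀ i ∈ Finset.Ico (j+1) (j'+1), σ j' ≤ σ i := by
      intro i hi
      rw [Finset.mem_Ico] at hi
      exact hanti i j' (by omega) (by omega) hj'r
    have h2 := Finset.card_nsmul_le_sum _ _ _ h1
    rw [Nat.card_Ico] at h2
    have : ((j'+1) - (j+1) : ℕ) = j' - j := by omega
    rw [this] at h2
    have hcast : (↑(j' - j) : ℝ) = (j' : ℝ) - j := by
      push_cast [Nat.cast_sub (le_of_lt hjj')]; ring
    calc ((j' : ℝ) - j) * σ j' = (↑(j' - j) : ℝ) * σ j' := by rw [hcast]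
      _ = (j' - j : ℕ) • σ j' := by simp [nsmul_eq_mul]
      _ ≤ _ := h2
  -- compare arguments of g
  have harg : (∑ i ∈ Finset.Icc 1 j, σ i) - (j : ℝ) * t j
      ≤ (∑ i ∈ Finset.Icc 1 j', σ i) - (j' : ℝ) * t j' := by
    rw [hsum]
    have hjle : (j : ℝ) ≤ (j' : ℝ) := by exact_mod_cast le_of_lt hjj'
    have hjpos : (0 : ℝ) ≤ (j : ℝ) := by positivity
    nlinarith [hmid, hlt, hj']
  have hge : t j ≤ t j' := by
    have := mul_le_mul_of_nonneg_left (hgm harg) (le_of_lt hτ)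
    rwa [ht j hj1 hjr, ht j' hj'1 hj'r] at this
  linarith
end

section
/- Let f : ℝ → ℝ be convex, differentiable, nondecreasing with nondecreasing derivative and f′(0) ≤ 1, let τ > 0 and y₁ ≥ y₂ ≥ … ≥ y_n ≥ 0. Then the minimizer x* ∈ ℝⁿ of τ·f(∑ᵢ xᵢ) + (1/2)∑ᵢ(xᵢ − yᵢ)² over the set {x : x₁ ≥ x₂ ≥ … ≥ x_n ≥ 0} is given by x*ᵢ = max(yᵢ − t, 0), where t = τ·f′(∑ᵢ max(yᵢ − t, 0)) (t = y₁ if τ·f′(0) ≥ y₁). -/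
open Set

/-- Gradient inequality for functions with monotone derivative. -/
private lemma grad_ineq (f : ℝ → ℝ) (hdiff : Differentiable ℝ f)
    (hf' : Monotone (deriv f)) (a b : ℝ) :
    f a + deriv f a * (b - a) ≤ f b := by
  rcases lt_trichotomy a b with h | h | h
  · obtain ⟨c, hc, hc'⟩ := exists_deriv_eq_slope f h hdiff.continuous.continuousOn
      (hdiff.differentiableOn)
    have h1 : deriv f a ≤ deriv f c := hf' hc.1.le
    have h2 : deriv f c * (b - a) = f b - f a := by
      rw [hc']; exact div_mul_cancel₀ _ (sub_ne_zero.mpr (ne_of_gt h))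
    nlinarith [sub_pos.2 h]
  · subst h; simp
  · obtain ⟨c, hc, hc'⟩ := exists_deriv_eq_slope f h hdiff.continuous.continuousOn
      (hdiff.differentiableOn)
    have h1 : deriv f c ≤ deriv f a := hf' hc.2.le
    have h2 : deriv f c * (a - b) = f a - f b := by
      rw [hc']; exact div_mul_cancel₀ _ (sub_ne_zero.mpr (ne_of_gt h))
    nlinarith [sub_pos.2 h]

/-- derivative is nonneg for a monotone differentiable function. -/
private lemma deriv_nn (f : ℝ → ℝ) (hdiff : Differentiable ℝ f) (hfm : Monotone f)
    (hf' : Monotone (deriv f)) (x : ℝ) : 0 ≤ deriv f x := by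
  have h := grad_ineq f hdiff hf' x (x - 1)
  have h2 : f (x - 1) ≤ f x := hfm (by linarith)
  nlinarith

/-- the derivative of a differentiable function with monotone derivative is continuous. -/
private lemma deriv_cont (f : ℝ → ℝ) (hdiff : Differentiable ℝ f)
    (hf' : Monotone (deriv f)) : Continuous (deriv f) := by
  rw [continuous_iff_continuousAt]
  intro a
  rw [hf'.continuousAt_iff_leftLim_eq_rightLim]
  have hL : Function.leftLim (deriv f) a ≤ deriv f a := hf'.leftLim_le le_rfl
  have hR : deriv f a ≤ Function.rightLim (deriv f) a := hf'.le_rightLim le_rfl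
  have darboux : ∀ u v : ℝ, u ≤ v → ∀ x ∈ Icc u v, HasDerivWithinAt f (deriv f x) (Icc u v) x :=
    fun u v _ x _ => (hdiff x).hasDerivAt.hasDerivWithinAt
  have hL' : deriv f a ≤ Function.leftLim (deriv f) a := by
    by_contra hlt
    push_neg at hlt
    obtain ⟨m, hm1, hm2⟩ := exists_between hlt
    have hfa1 : deriv f (a - 1) ≤ Function.leftLim (deriv f) a :=
      hf'.le_leftLim (by linarith)
    obtain ⟨c, hc, hc'⟩ := exists_hasDerivWithinAt_eq_of_gt_of_lt (by linarith : a - 1 ≤ a)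
      (darboux (a - 1) a (by linarith)) (lt_of_le_of_lt hfa1 hm1) hm2
    have hca : c < a := hc.2
    have : m ≤ Function.leftLim (deriv f) a := hc' ▸ hf'.le_leftLim hca
    linarith
  have hR' : Function.rightLim (deriv f) a ≤ deriv f a := by
    by_contra hlt
    push_neg at hlt
    obtain ⟨m, hm1, hm2⟩ := exists_between hlt
    have hfa1 : Function.rightLim (deriv f) a ≤ deriv f (a + 1) :=
      hf'.rightLim_le (by linarith)
    obtain ⟨c, hc, hc'⟩ := exists_hasDerivWithinAt_eq_of_gt_of_lt (by linarith : a ≤ a + 1)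
      (darboux a (a + 1) (by linarith)) hm1 (lt_of_lt_of_le hm2 hfa1)
    have hca : a < c := hc.1
    have : Function.rightLim (deriv f) a ≤ m := hc' ▸ hf'.rightLim_le hca
    linarith
  linarith

/-- Key inequality: the candidate minimizer beats any feasible point by at least half the
squared distance. -/
private lemma key_ineq (n : ℕ) (f : ℝ → ℝ) (hdiff : Differentiable ℝ f)
    (hf' : Monotone (deriv f)) (τ : ℝ) (hτ : 0 < τ) (y : Fin n → ℝ) (t : ℝ)
    (Hmin : ∀ i, min t (y i) ≤ τ * deriv f (∑ i, max (y i - t) 0))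
    (Heq : ∀ i, t < y i → τ * deriv f (∑ i, max (y i - t) 0) ≤ t)
    (x : Fin n → ℝ) (hxnn : ∀ i, 0 ≤ x i) :
    τ * f (∑ i, max (y i - t) 0) + (1 / 2) * ∑ i, (max (y i - t) 0 - y i) ^ 2
      + (1 / 2) * ∑ i, (x i - max (y i - t) 0) ^ 2
      ≤ τ * f (∑ i, x i) + (1 / 2) * ∑ i, (x i - y i) ^ 2 := by
  set c := τ * deriv f (∑ i, max (y i - t) 0) with hc
  set X : Fin n → ℝ := fun i => max (y i - t) 0 with hX
  have hterm : ∀ i : Fin n, (1/2) * (X i - y i) ^ 2 + (1/2) * (x i - X i) ^ 2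
      ≤ c * (x i - X i) + (1/2) * (x i - y i) ^ 2 := by
    intro i
    have hprod : 0 ≤ (c + X i - y i) * (x i - X i) := by
      rcases le_or_gt (y i) t with hyt | hyt
      · have hXi : X i = 0 := max_eq_right (by linarith)
        have hmin : min t (y i) = y i := min_eq_right hyt
        have := Hmin i
        rw [hmin] at this
        rw [hXi]
        have := hxnn i
        nlinarith
      · have hXi : X i = y i - t := max_eq_left (by linarith)
        have hmin : min t (y i) = t := min_eq_left hyt.le
        have h1 := Hmin i
        rw [hmin] at h1
        have h2 := Heq i hyt
        have hct : c = t := le_antisymm h2 h1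
        rw [hXi, hct]
        ring_nf
        nlinarith [sq_nonneg (x i - (y i - t))]
    nlinarith [hprod]
  have hsum : ∑ i, ((1/2) * (X i - y i) ^ 2 + (1/2) * (x i - X i) ^ 2)
      ≤ ∑ i, (c * (x i - X i) + (1/2) * (x i - y i) ^ 2) :=
    Finset.sum_le_sum fun i _ => hterm i
  have hgrad := grad_ineq f hdiff hf' (∑ i, X i) (∑ i, x i)
  have hgrad' : τ * f (∑ i, X i) + c * ((∑ i, x i) - ∑ i, X i) ≤ τ * f (∑ i, x i) := by
    have := mul_le_mul_of_nonneg_left hgrad hτ.le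
    rw [hc]
    nlinarith
  have hcs : c * ((∑ i, x i) - ∑ i, X i) = c * ∑ i, (x i - X i) := by
    rw [Finset.sum_sub_distrib]
  rw [hcs] at hgrad'
  simp only [Finset.sum_add_distrib, ← Finset.mul_sum] at hsum
  simp only [hX] at hsum hgrad' ⊢
  linarith

theorem stmt_16 (n : ℕ) (hn : 0 < n) (f : ℝ → ℝ)
    (hf : ConvexOn ℝ Set.univ f) (hfm : Monotone f)
    (hdiff : Differentiable ℝ f) (hf' : Monotone (deriv f))
    (hf'0 : deriv f 0 ≤ 1)
    (τ : ℝ) (hτ : 0 < τ) (y : Fin n → ℝ)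
    (hymono : ∀ i j : Fin n, i ≤ j → y j ≤ y i)
    (hynn : ∀ i, 0 ≤ y i) :
    ∃ t : ℝ,
      ((y ⟨0, hn⟩ ≤ τ * deriv f 0 ∧ t = y ⟨0, hn⟩) ∨
        t = τ * deriv f (∑ i, max (y i - t) 0)) ∧
      (∀ x : Fin n → ℝ, (∀ i j : Fin n, i ≤ j → x j ≤ x i) → (∀ i, 0 ≤ x i) →
        τ * f (∑ i, max (y i - t) 0) +
            (1 / 2) * ∑ i, (max (y i - t) 0 - y i) ^ 2 ≤
          τ * f (∑ i, x i) + (1 / 2) * ∑ i, (x i - y i) ^ 2) ∧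
      (∀ x : Fin n → ℝ, (∀ i j : Fin n, i ≤ j → x j ≤ x i) → (∀ i, 0 ≤ x i) →
        (∀ z : Fin n → ℝ, (∀ i j : Fin n, i ≤ j → z j ≤ z i) → (∀ i, 0 ≤ z i) →
          τ * f (∑ i, x i) + (1 / 2) * ∑ i, (x i - y i) ^ 2 ≤
            τ * f (∑ i, z i) + (1 / 2) * ∑ i, (z i - y i) ^ 2) →
        x = fun i => max (y i - t) 0) := by
  set y0 := y ⟨0, hn⟩ with hy0
  have hyle : ∀ i, y i ≤ y0 := fun i => hymono ⟨0, hn⟩ i (Fin.mk_le_mk.mpr (Nat.zero_le _))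
  have hy0nn : 0 ≤ y0 := hynn _
  have hdnn : ∀ x, 0 ≤ deriv f x := deriv_nn f hdiff hfm hf'
  -- obtain a suitable t together with the key properties
  obtain ⟨t, hcase, Hmin, Heq⟩ :
      ∃ t : ℝ,
        ((y0 ≤ τ * deriv f 0 ∧ t = y0) ∨ t = τ * deriv f (∑ i, max (y i - t) 0)) ∧
        (∀ i, min t (y i) ≤ τ * deriv f (∑ i, max (y i - t) 0)) ∧
        (∀ i, t < y i → τ * deriv f (∑ i, max (y i - t) 0) ≤ t) := by
    rcases le_or_gt y0 (τ * deriv f 0) with hcase | hcase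
    · refine ⟨y0, Or.inl ⟨hcase, rfl⟩, ?_, ?_⟩
      · have hS : (∑ i, max (y i - y0) 0) = 0 := by
          apply Finset.sum_eq_zero
          intro i _
          exact max_eq_right (by linarith [hyle i])
        rw [hS]
        intro i
        calc min y0 (y i) ≤ y0 := min_le_left _ _
          _ ≤ τ * deriv f 0 := hcase
      · intro i hi
        exact absurd (hyle i) (not_le.mpr hi)
    · -- find a fixed point via the intermediate value theorem
      set S : ℝ → ℝ := fun t => ∑ i, max (y i - t) 0 with hS
      have hScont : Continuous S := by
        apply continuous_finset_sum
        intro i _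
        exact (continuous_const.sub continuous_id).max continuous_const
      set h : ℝ → ℝ := fun t => t - τ * deriv f (S t) with hh
      have hhcont : Continuous h :=
        continuous_id.sub (continuous_const.mul ((deriv_cont f hdiff hf').comp hScont))
      have hSy0 : S y0 = 0 := by
        apply Finset.sum_eq_zero
        intro i _
        exact max_eq_right (by linarith [hyle i])
      have h0 : h 0 ≤ 0 := by
        simp only [hh]
        have := hdnn (S 0)
        nlinarith
      have hy0' : 0 ≤ h y0 := by
        simp only [hh]
        rw [hSy0]
        linarith
      have := intermediate_value_Icc hy0nn hhcont.continuousOn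
      have hmem : (0 : ℝ) ∈ Icc (h 0) (h y0) := ⟨h0, hy0'⟩
      obtain ⟨t, ht, hht⟩ := this hmem
      have hfix : t = τ * deriv f (∑ i, max (y i - t) 0) := by
        have : t - τ * deriv f (S t) = 0 := hht
        simp only [hS] at this
        linarith
      refine ⟨t, Or.inr hfix, ?_, ?_⟩
      · intro i
        rw [← hfix]
        exact min_le_left _ _
      · intro i _
        rw [← hfix]
  refine ⟨t, hcase, ?_, ?_⟩
  · intro x _ hxnn
    have := key_ineq n f hdiff hf' τ hτ y t Hmin Heq x hxnn
    have hnn : 0 ≤ (1 / 2) * ∑ i, (x i - max (y i - t) 0) ^ 2 := by positivity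
    linarith
  · intro x hxmono hxnn hmin
    have hzmono : ∀ i j : Fin n, i ≤ j → max (y j - t) 0 ≤ max (y i - t) 0 := by
      intro i j hij
      exact max_le_max (by linarith [hymono i j hij]) le_rfl
    have hznn : ∀ i : Fin n, (0:ℝ) ≤ max (y i - t) 0 := fun i => le_max_right _ _
    have h1 := hmin (fun i => max (y i - t) 0) hzmono hznn
    have h2 := key_ineq n f hdiff hf' τ hτ y t Hmin Heq x hxnn
    have hsum0 : ∑ i, (x i - max (y i - t) 0) ^ 2 ≤ 0 := by linarith
    have hzero : ∀ i ∈ Finset.univ, (x i - max (y i - t) 0) ^ 2 = 0 := by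
      rw [← Finset.sum_eq_zero_iff_of_nonneg (fun i _ => sq_nonneg _)]
      exact le_antisymm hsum0 (Finset.sum_nonneg fun i _ => sq_nonneg _)
    funext i
    have := hzero i (Finset.mem_univ i)
    have := pow_eq_zero_iff (n := 2) (by norm_num) |>.mp this
    simpa [sub_eq_zero] using this
end
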